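/- For all integers m ≥ 1 and t ≥ 1, every vertex v of the Koch network K_{m,t} that is not an initial vertex has exactly one neighbor of degree strictly greater than the degree of v (its father vertex, added at an earlier step), and every other neighbor of v apart from this father and the unique equal-degree neighbor has degree strictly smaller than the degree of v (these are the vertices attached to v at later steps). -/

import Mathlib

/-- The triangles of the Koch network `K_{m,t}`: at step `t+1`, each old triangle survives and
each (triangle, corner, group) creates a new triangle. -/
def KochTri (m : ℕ) : ℕ → Type
  | 0 => Unit
  | t+1 => KochTri m t ⊕ (KochTri m t × Fin 3 × Fin m)

/-- The vertices of the Koch network `K_{m,t}`: at step `t+1`, each (triangle, corner, group)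
creates two new vertices. -/
def KochVertex (m : ℕ) : ℕ → Type
  | 0 => Fin 3
  | t+1 => KochVertex m t ⊕ (KochTri m t × Fin 3 × Fin m × Fin 2)

/-- The three corner vertices of each triangle. -/
def KochCorner (m : ℕ) : ∀ t, KochTri m t → Fin 3 → KochVertex m t
  | 0, _, i => i
  | t+1, Sum.inl τ, i => Sum.inl (KochCorner m t τ i)
  | t+1, Sum.inr (τ, c, g), i =>
      ![Sum.inl (KochCorner m t τ c), Sum.inr (τ, c, g, 0), Sum.inr (τ, c, g, 1)] i

instance KochTri.instDecidableEq (m : ℕ) : ∀ t, DecidableEq (KochTri m t)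
  | 0 => inferInstanceAs (DecidableEq Unit)
  | t+1 =>
    letI := KochTri.instDecidableEq m t
    inferInstanceAs (DecidableEq (KochTri m t ⊕ (KochTri m t × Fin 3 × Fin m)))

instance KochVertex.instDecidableEq (m : ℕ) : ∀ t, DecidableEq (KochVertex m t)
  | 0 => inferInstanceAs (DecidableEq (Fin 3))
  | t+1 =>
    letI := KochVertex.instDecidableEq m t
    letI := KochTri.instDecidableEq m t
    inferInstanceAs (DecidableEq (KochVertex m t ⊕ (KochTri m t × Fin 3 × Fin m × Fin 2)))

instance KochTri.instFintype (m : ℕ) : ∀ t, Fintype (KochTri m t)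
  | 0 => inferInstanceAs (Fintype Unit)
  | t+1 =>
    letI := KochTri.instFintype m t
    inferInstanceAs (Fintype (KochTri m t ⊕ (KochTri m t × Fin 3 × Fin m)))

instance KochVertex.instFintype (m : ℕ) : ∀ t, Fintype (KochVertex m t)
  | 0 => inferInstanceAs (Fintype (Fin 3))
  | t+1 =>
    letI := KochVertex.instFintype m t
    letI := KochTri.instFintype m t
    inferInstanceAs (Fintype (KochVertex m t ⊕ (KochTri m t × Fin 3 × Fin m × Fin 2)))

/-- The Koch network `K_{m,t}`: two distinct vertices are adjacent iff they are corners of a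
common triangle. -/
def KochGraph (m t : ℕ) : SimpleGraph (KochVertex m t) where
  Adj u v := u ≠ v ∧ ∃ (τ : KochTri m t) (i j : Fin 3),
      KochCorner m t τ i = u ∧ KochCorner m t τ j = v
  symm := ⟨by rintro u v ⟨hne, τ, i, j, hi, hj⟩; exact ⟨hne.symm, τ, j, i, hj, hi⟩⟩
  loopless := ⟨by rintro u ⟨hne, -⟩; exact hne rfl⟩

instance (m t : ℕ) : DecidableRel (KochGraph m t).Adj := fun u v =>
  inferInstanceAs (Decidable (u ≠ v ∧ ∃ (τ : KochTri m t) (i j : Fin 3),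
      KochCorner m t τ i = u ∧ KochCorner m t τ j = v))

/-- The step at which a vertex of `K_{m,t}` was added (initial vertices are added at step 0). -/
def KochBirth (m : ℕ) : ∀ t, KochVertex m t → ℕ
  | 0, _ => 0
  | t+1, Sum.inl v => KochBirth m t v
  | t+1, Sum.inr _ => t+1

/-- The canonical inclusion of `K_{m,t}` into `K_{m,t+1}`. -/
def KochInl (m t : ℕ) (v : KochVertex m t) : KochVertex m (t+1) := Sum.inl v

/-- The other member of the group of two with which a (non-initial) vertex was added. -/
def KochSibling (m : ℕ) : ∀ t, KochVertex m t → KochVertex m t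
  | 0, v => v
  | t+1, Sum.inl v => Sum.inl (KochSibling m t v)
  | t+1, Sum.inr (τ, c, g, p) => Sum.inr (τ, c, g, if p = 0 then 1 else 0)

/-- The father vertex of a (non-initial) vertex: the existing vertex to which its group of two
was attached. -/
def KochFather (m : ℕ) : ∀ t, KochVertex m t → KochVertex m t
  | 0, v => v
  | t+1, Sum.inl v => Sum.inl (KochFather m t v)
  | t+1, Sum.inr (τ, c, _, _) => Sum.inl (KochCorner m t τ c)

/-!
A triangle through a vertex contributes two neighbours, and two triangles share at most one
vertex, so the degree of a vertex is twice the number of triangles through it. From one step to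
the next every triangle through an old vertex survives and spawns `m` new ones at it, while a new
vertex lies in exactly one triangle; hence a vertex added at step `s` has degree `2 (m+1)^(t-s)` in
`K_{m,t}`, strictly decreasing in `s` once `m ≥ 1`. The neighbours of a non-initial vertex are its
father (added earlier), its sibling (added at the same step) and the vertices it fathered (added
later).
-/

namespace Koch

open Finset

variable {m t : ℕ}

/- A bare `Sum.inl a` or `Sum.inr x` has type `KochVertex m (t+1)` only after unfolding
`KochVertex`, which `simp` and `rw` do not do; stating everything through `KochInl` and these
names keeps the terms well-typed for them. -/

def newVertex (τ : KochTri m t) (c : Fin 3) (g : Fin m) (p : Fin 2) : KochVertex m (t+1) :=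
  Sum.inr (τ, c, g, p)

def oldTri (τ : KochTri m t) : KochTri m (t+1) := Sum.inl τ

def newTri (τ : KochTri m t) (c : Fin 3) (g : Fin m) : KochTri m (t+1) := Sum.inr (τ, c, g)

@[elab_as_elim]
lemma vertex_succ_cases {motive : KochVertex m (t+1) → Prop} (v : KochVertex m (t+1))
    (old : ∀ a, motive (KochInl m t a)) (new : ∀ τ c g p, motive (newVertex τ c g p)) :
    motive v := by
  rcases v with a | ⟨τ, c, g, p⟩
  exacts [old a, new τ c g p]

@[elab_as_elim]
lemma tri_succ_cases {motive : KochTri m (t+1) → Prop} (σ : KochTri m (t+1))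
    (old : ∀ τ, motive (oldTri τ)) (new : ∀ τ c g, motive (newTri τ c g)) : motive σ := by
  rcases σ with τ | ⟨τ, c, g⟩
  exacts [old τ, new τ c g]

section Constructors

variable {a b : KochVertex m t} {τ τ' : KochTri m t} {c c' : Fin 3} {g g' : Fin m} {p p' : Fin 2}

@[simp] lemma inl_inj : KochInl m t a = KochInl m t b ↔ a = b := Sum.inl.inj_iff

@[simp] lemma newVertex_inj :
    newVertex τ c g p = newVertex τ' c' g' p' ↔ τ = τ' ∧ c = c' ∧ g = g' ∧ p = p' :=
  Sum.inr.inj_iff.trans <| by simp only [Prod.mk.injEq]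

@[simp] lemma inl_ne_newVertex : KochInl m t a ≠ newVertex τ c g p := Sum.inl_ne_inr

@[simp] lemma newVertex_ne_inl : newVertex τ c g p ≠ KochInl m t a := Sum.inr_ne_inl

@[simp] lemma newTri_inj : newTri τ c g = newTri τ' c' g' ↔ τ = τ' ∧ c = c' ∧ g = g' :=
  Sum.inr.inj_iff.trans <| by simp only [Prod.mk.injEq]

@[simp] lemma corner_oldTri (i : Fin 3) :
    KochCorner m (t+1) (oldTri τ) i = KochInl m t (KochCorner m t τ i) := rfl

@[simp] lemma corner_newTri_zero :
    KochCorner m (t+1) (newTri τ c g) 0 = KochInl m t (KochCorner m t τ c) := rfl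

@[simp] lemma corner_newTri_succ (p : Fin 2) :
    KochCorner m (t+1) (newTri τ c g) p.succ = newVertex τ c g p := by
  fin_cases p <;> rfl

@[simp] lemma father_inl : KochFather m (t+1) (KochInl m t a) = KochInl m t (KochFather m t a) :=
  rfl

@[simp] lemma father_newVertex :
    KochFather m (t+1) (newVertex τ c g p) = KochInl m t (KochCorner m t τ c) := rfl

@[simp] lemma sibling_inl :
    KochSibling m (t+1) (KochInl m t a) = KochInl m t (KochSibling m t a) := rfl

@[simp] lemma sibling_newVertex :
    KochSibling m (t+1) (newVertex τ c g p) = newVertex τ c g p.rev := by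
  fin_cases p <;> rfl

@[simp] lemma birth_inl : KochBirth m (t+1) (KochInl m t a) = KochBirth m t a := rfl

@[simp] lemma birth_newVertex : KochBirth m (t+1) (newVertex τ c g p) = t + 1 := rfl

end Constructors

lemma corner_injective (τ : KochTri m t) : Function.Injective (KochCorner m t τ) := by
  induction t with
  | zero => exact fun _ _ h => h
  | succ t ih =>
    cases τ using tri_succ_cases with
    | old τ => exact fun i j h => ih τ (by simpa using h)
    | new τ c g =>
      intro i j h
      cases i using Fin.cases <;> cases j using Fin.cases <;> simp_all

lemma corner_eq_newVertex_iff {σ : KochTri m (t+1)} {k : Fin 3}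
    {τ : KochTri m t} {c : Fin 3} {g : Fin m} {p : Fin 2} :
    KochCorner m (t+1) σ k = newVertex τ c g p ↔ σ = newTri τ c g ∧ k = p.succ := by
  constructor
  · cases σ using tri_succ_cases with
    | old τ' => simp
    | new τ' c' g' => cases k using Fin.cases <;> simp_all
  · rintro ⟨rfl, rfl⟩
    exact corner_newTri_succ p

lemma corner_newTri_eq_inl_iff {τ : KochTri m t} {c : Fin 3} {g : Fin m} {k : Fin 3}
    {a : KochVertex m t} :
    KochCorner m (t+1) (newTri τ c g) k = KochInl m t a ↔ k = 0 ∧ KochCorner m t τ c = a := by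
  cases k using Fin.cases <;> simp [Fin.succ_ne_zero]

lemma eq_of_corner_eq_of_corner_eq {σ σ' : KochTri m t} {i j i' j' : Fin 3} (hij : i ≠ j)
    (hi : KochCorner m t σ i = KochCorner m t σ' i')
    (hj : KochCorner m t σ j = KochCorner m t σ' j') : σ = σ' := by
  induction t with
  | zero => rfl
  | succ t ih =>
    cases σ using tri_succ_cases with
    | new τ c g =>
      obtain ⟨k, k', hk, hkk'⟩ : ∃ k k', k ≠ 0 ∧
          KochCorner m (t+1) (newTri τ c g) k = KochCorner m (t+1) σ' k' := by
        rcases eq_or_ne i 0 with rfl | hi0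
        · exact ⟨j, j', hij.symm, hj⟩
        · exact ⟨i, i', hi0, hi⟩
      obtain ⟨p, rfl⟩ := Fin.exists_succ_eq.2 hk
      rw [corner_newTri_succ, eq_comm, corner_eq_newVertex_iff] at hkk'
      exact hkk'.1.symm
    | old τ =>
      cases σ' using tri_succ_cases with
      | old τ' =>
        simp only [corner_oldTri, inl_inj] at hi hj
        rw [ih hi hj]
      | new τ' c' g' =>
        obtain ⟨-, hi⟩ := corner_newTri_eq_inl_iff.1 hi.symm
        obtain ⟨-, hj⟩ := corner_newTri_eq_inl_iff.1 hj.symm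
        exact absurd (corner_injective τ (hi.symm.trans hj)) hij

lemma adj_inl_inl {a b : KochVertex m t} :
    (KochGraph m (t+1)).Adj (KochInl m t a) (KochInl m t b) ↔ (KochGraph m t).Adj a b := by
  constructor
  · rintro ⟨hne, σ, i, j, hi, hj⟩
    cases σ using tri_succ_cases with
    | old τ => exact ⟨mt inl_inj.2 hne, τ, i, j, inl_inj.1 hi, inl_inj.1 hj⟩
    | new τ c g =>
      obtain ⟨-, rfl⟩ := corner_newTri_eq_inl_iff.1 hi
      obtain ⟨-, rfl⟩ := corner_newTri_eq_inl_iff.1 hj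
      exact absurd rfl hne
  · rintro ⟨hne, τ, i, j, rfl, rfl⟩
    exact ⟨mt inl_inj.1 hne, oldTri τ, i, j, rfl, rfl⟩

lemma adj_inl_newVertex {a : KochVertex m t} {τ : KochTri m t} {c : Fin 3} {g : Fin m}
    {p : Fin 2} :
    (KochGraph m (t+1)).Adj (KochInl m t a) (newVertex τ c g p) ↔ KochCorner m t τ c = a := by
  constructor
  · rintro ⟨-, σ, i, j, hi, hj⟩
    obtain ⟨rfl, -⟩ := corner_eq_newVertex_iff.1 hj
    exact (corner_newTri_eq_inl_iff.1 hi).2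
  · rintro rfl
    exact ⟨inl_ne_newVertex, newTri τ c g, 0, p.succ, rfl, corner_newTri_succ p⟩

lemma adj_newVertex_inl {a : KochVertex m t} {τ : KochTri m t} {c : Fin 3} {g : Fin m}
    {p : Fin 2} :
    (KochGraph m (t+1)).Adj (newVertex τ c g p) (KochInl m t a) ↔ KochCorner m t τ c = a :=
  (SimpleGraph.adj_comm _ _ _).trans adj_inl_newVertex

lemma adj_newVertex_newVertex {τ τ' : KochTri m t} {c c' : Fin 3} {g g' : Fin m}
    {p p' : Fin 2} :
    (KochGraph m (t+1)).Adj (newVertex τ c g p) (newVertex τ' c' g' p') ↔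
      newVertex τ' c' g' p' = newVertex τ c g p.rev := by
  constructor
  · rintro ⟨hne, σ, i, j, hi, hj⟩
    obtain ⟨rfl, -⟩ := corner_eq_newVertex_iff.1 hi
    obtain ⟨h, -⟩ := corner_eq_newVertex_iff.1 hj
    obtain ⟨rfl, rfl, rfl⟩ := newTri_inj.1 h
    fin_cases p <;> fin_cases p' <;> simp_all
  · intro h
    rw [h]
    refine ⟨by fin_cases p <;> simp, newTri τ c g, p.succ, p.rev.succ, ?_, ?_⟩ <;>
      exact corner_newTri_succ _

lemma adj_iff_of_birth_ne_zero {v u : KochVertex m t} (hv : KochBirth m t v ≠ 0) :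
    (KochGraph m t).Adj v u ↔
      u = KochFather m t v ∨ u = KochSibling m t v ∨ (KochFather m t u = v ∧ u ≠ v) := by
  induction t with
  | zero => exact absurd rfl hv
  | succ t ih =>
    cases v using vertex_succ_cases with
    | old a =>
      cases u using vertex_succ_cases with
      | old b => simpa [adj_inl_inl] using ih hv
      | new τ c g p => simp [adj_inl_newVertex]
    | new τ c g p =>
      cases u using vertex_succ_cases with
      | old b => simp [adj_newVertex_inl, eq_comm]
      | new τ' c' g' p' => simp [adj_newVertex_newVertex]

lemma birth_le (v : KochVertex m t) : KochBirth m t v ≤ t := by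
  induction t with
  | zero => exact le_rfl
  | succ t ih => cases v using vertex_succ_cases with
    | old a => exact (ih a).trans t.le_succ
    | new => exact le_rfl

lemma birth_sibling (v : KochVertex m t) : KochBirth m t (KochSibling m t v) = KochBirth m t v := by
  induction t with
  | zero => rfl
  | succ t ih => cases v using vertex_succ_cases with
    | old a => exact ih a
    | new => rfl

lemma father_eq_self_of_birth_eq_zero {v : KochVertex m t} (hv : KochBirth m t v = 0) :
    KochFather m t v = v := by
  induction t with
  | zero => rfl
  | succ t ih => cases v using vertex_succ_cases with
    | old a => exact congrArg (KochInl m t) (ih hv)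
    | new => exact absurd hv t.succ_ne_zero

lemma birth_father_lt {v : KochVertex m t} (hv : KochBirth m t v ≠ 0) :
    KochBirth m t (KochFather m t v) < KochBirth m t v := by
  induction t with
  | zero => exact absurd rfl hv
  | succ t ih => cases v using vertex_succ_cases with
    | old a => exact ih hv
    | new τ c => exact Nat.lt_succ_of_le (birth_le (KochCorner m t τ c))

lemma birth_lt_of_father_eq {u v : KochVertex m t} (hf : KochFather m t u = v) (hne : u ≠ v) :
    KochBirth m t v < KochBirth m t u := by
  by_cases hu : KochBirth m t u = 0
  · exact absurd ((father_eq_self_of_birth_eq_zero hu).symm.trans hf) hne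
  · exact hf ▸ birth_father_lt hu

def incidences (m t : ℕ) (v : KochVertex m t) : Finset (KochTri m t × Fin 3) :=
  {p | KochCorner m t p.1 p.2 = v}

@[simp] lemma mem_incidences {v : KochVertex m t} {p : KochTri m t × Fin 3} :
    p ∈ incidences m t v ↔ KochCorner m t p.1 p.2 = v := by
  simp [incidences]

lemma card_incidences_eq_sum (v : KochVertex m t) :
    #(incidences m t v) = ∑ τ, ∑ i, if KochCorner m t τ i = v then 1 else 0 := by
  rw [incidences, card_filter, Fintype.sum_prod_type]

lemma sum_tri_succ {M : Type*} [AddCommMonoid M] (f : KochTri m (t+1) → M) :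
    ∑ σ, f σ = ∑ τ, f (oldTri τ) + ∑ τ, ∑ c, ∑ g, f (newTri τ c g) :=
  (Fintype.sum_sum_type f).trans <| by simp only [Fintype.sum_prod_type]; rfl

lemma card_incidences_zero (v : KochVertex m 0) : #(incidences m 0 v) = 1 :=
  card_eq_one.2 ⟨((), v), by
    ext ⟨⟨⟩, i⟩
    rw [mem_incidences, mem_singleton]
    exact ⟨fun h => h ▸ rfl, congrArg Prod.snd⟩⟩

lemma card_incidences_newVertex (τ : KochTri m t) (c : Fin 3) (g : Fin m) (p : Fin 2) :
    #(incidences m (t+1) (newVertex τ c g p)) = 1 :=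
  card_eq_one.2 ⟨(newTri τ c g, p.succ), by ext; simp [corner_eq_newVertex_iff, Prod.ext_iff]⟩

lemma card_incidences_inl (v : KochVertex m t) :
    #(incidences m (t+1) (KochInl m t v)) = (m+1) * #(incidences m t v) := by
  have old (τ : KochTri m t) :
      ∑ i, (if KochCorner m (t+1) (oldTri τ) i = KochInl m t v then 1 else 0) =
        ∑ i, if KochCorner m t τ i = v then 1 else 0 := by
    simp
  have new (τ : KochTri m t) (c : Fin 3) (g : Fin m) :
      ∑ i, (if KochCorner m (t+1) (newTri τ c g) i = KochInl m t v then 1 else 0) =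
        if KochCorner m t τ c = v then 1 else 0 := by
    simp [Fin.sum_univ_succ (n := 2)]
  simp only [card_incidences_eq_sum, sum_tri_succ, old, new, sum_const, card_univ,
    Fintype.card_fin, smul_eq_mul, ← mul_sum]
  ring

lemma card_incidences (v : KochVertex m t) :
    #(incidences m t v) = (m+1) ^ (t - KochBirth m t v) := by
  induction t with
  | zero => exact card_incidences_zero v
  | succ t ih =>
    cases v using vertex_succ_cases with
    | old a =>
      rw [card_incidences_inl, ih, birth_inl, ← pow_succ', Nat.sub_add_comm (birth_le a)]
    | new τ c g p => rw [card_incidences_newVertex, birth_newVertex, Nat.sub_self, pow_zero]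

lemma neighborFinset_eq_biUnion (v : KochVertex m t) :
    (KochGraph m t).neighborFinset v =
      (incidences m t v).biUnion fun p => (univ.erase p.2).image (KochCorner m t p.1) := by
  ext u
  simp only [SimpleGraph.mem_neighborFinset, mem_biUnion, mem_image, mem_erase, mem_incidences,
    mem_univ, and_true, Prod.exists]
  constructor
  · rintro ⟨hne, τ, i, j, rfl, rfl⟩
    exact ⟨τ, i, rfl, j, fun h => hne (h ▸ rfl), rfl⟩
  · rintro ⟨τ, i, rfl, j, hji, rfl⟩
    exact ⟨fun h => hji (corner_injective τ h).symm, τ, i, j, rfl, rfl⟩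

lemma degree_eq_two_mul_card_incidences (v : KochVertex m t) :
    (KochGraph m t).degree v = 2 * #(incidences m t v) := by
  rw [← SimpleGraph.card_neighborFinset_eq_degree, neighborFinset_eq_biUnion, card_biUnion,
    mul_comm, ← smul_eq_mul, ← sum_const]
  · refine sum_congr rfl fun p _ => ?_
    rw [card_image_of_injective _ (corner_injective p.1)]
    simp
  · rintro ⟨τ, i⟩ hi ⟨τ', i'⟩ hi' hne
    refine disjoint_left.2 fun u hu hu' => hne ?_
    rw [mem_coe, mem_incidences] at hi hi'
    obtain ⟨j, hj, rfl⟩ := mem_image.1 hu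
    obtain ⟨j', -, hj'⟩ := mem_image.1 hu'
    obtain rfl := eq_of_corner_eq_of_corner_eq (ne_of_mem_erase hj).symm (hi.trans hi'.symm)
      hj'.symm
    exact congrArg (Prod.mk τ) (corner_injective τ (hi.trans hi'.symm))

lemma degree_eq_two_mul_pow (v : KochVertex m t) :
    (KochGraph m t).degree v = 2 * (m+1) ^ (t - KochBirth m t v) := by
  rw [degree_eq_two_mul_card_incidences, card_incidences]

lemma degree_lt_degree_of_birth_lt (hm : 0 < m) {u v : KochVertex m t}
    (h : KochBirth m t u < KochBirth m t v) :
    (KochGraph m t).degree v < (KochGraph m t).degree u := by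
  have := birth_le v
  rw [degree_eq_two_mul_pow, degree_eq_two_mul_pow]
  gcongr <;> omega

lemma degree_eq_degree_of_birth_eq {u v : KochVertex m t}
    (h : KochBirth m t u = KochBirth m t v) :
    (KochGraph m t).degree u = (KochGraph m t).degree v := by
  rw [degree_eq_two_mul_pow, degree_eq_two_mul_pow, h]

end Koch

open Koch in
theorem koch_father_neighbor_general (m t : ℕ) (hm : 1 ≤ m)
    (v : KochVertex m t) (hv : KochBirth m t v ≠ 0) :
    (KochGraph m t).Adj v (KochFather m t v)
    ∧ (KochGraph m t).degree v < (KochGraph m t).degree (KochFather m t v)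
    ∧ KochBirth m t (KochFather m t v) < KochBirth m t v
    ∧ (∀ u : KochVertex m t, (KochGraph m t).Adj v u →
        (KochGraph m t).degree v < (KochGraph m t).degree u → u = KochFather m t v)
    ∧ (∀ u : KochVertex m t, (KochGraph m t).Adj v u →
        u ≠ KochFather m t v → u ≠ KochSibling m t v →
        (KochGraph m t).degree u < (KochGraph m t).degree v) := by
  have hfather := birth_father_lt hv
  have hsibling : (KochGraph m t).degree (KochSibling m t v) = (KochGraph m t).degree v :=
    degree_eq_degree_of_birth_eq (birth_sibling v)
  have hchild {u} (hf : KochFather m t u = v) (hne : u ≠ v) :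
      (KochGraph m t).degree u < (KochGraph m t).degree v :=
    degree_lt_degree_of_birth_lt hm (birth_lt_of_father_eq hf hne)
  refine ⟨(adj_iff_of_birth_ne_zero hv).2 (.inl rfl), degree_lt_degree_of_birth_lt hm hfather,
    hfather, fun u hadj hdeg => ?_, fun u hadj hu hu' => ?_⟩
  · rcases (adj_iff_of_birth_ne_zero hv).1 hadj with rfl | rfl | ⟨hf, hne⟩
    · rfl
    · exact absurd hsibling hdeg.ne'
    · exact absurd (hchild hf hne) hdeg.not_gt
  · rcases (adj_iff_of_birth_ne_zero hv).1 hadj with rfl | rfl | ⟨hf, hne⟩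
    · exact absurd rfl hu
    · exact absurd rfl hu'
    · exact hchild hf hne

/-- For all integers m ≥ 1 and t ≥ 1, every non-initial vertex v of `K_{m,t}`
has exactly one neighbor of degree strictly greater than the degree of v, its father vertex
(which was added at an earlier step), and every other neighbor apart from this father and the
unique equal-degree neighbor (the sibling) has degree strictly smaller than the degree of v. -/
theorem koch_father_neighbor (m t : ℕ) (hm : 1 ≤ m) (ht : 1 ≤ t)
    (v : KochVertex m t) (hv : KochBirth m t v ≠ 0) :
    (KochGraph m t).Adj v (KochFather m t v)
    ∧ (KochGraph m t).degree v < (KochGraph m t).degree (KochFather m t v)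
    ∧ KochBirth m t (KochFather m t v) < KochBirth m t v
    ∧ (∀ u : KochVertex m t, (KochGraph m t).Adj v u →
        (KochGraph m t).degree v < (KochGraph m t).degree u → u = KochFather m t v)
    ∧ (∀ u : KochVertex m t, (KochGraph m t).Adj v u →
        u ≠ KochFather m t v → u ≠ KochSibling m t v →
        (KochGraph m t).degree u < (KochGraph m t).degree v) :=
  koch_father_neighbor_general m t hm v hv
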